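/- arXiv:2012.00565 — 7 statements merged into one kernel-verified Lean document; each statement's English description precedes it below -/
import Mathlib

section
/- Let H and H' be real Hilbert spaces and e : H → H' a continuous linear equivalence (so H and H' are the same space with equivalent norms, up to identification by e). Let K be a densely defined skew-selfadjoint operator on H (i.e. the adjoint of K equals −K), and let P : H → H be a compact bounded linear operator. If the conjugated operator e ∘ (K + P) ∘ e⁻¹, with domain e(D(K)), is skew-Hermitian on H' (i.e. ⟨T x, y⟩' = −⟨x, T y⟩' for all x, y in its domain), then e ∘ (K + P) ∘ e⁻¹ is skew-selfadjoint on H'. -/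
open scoped RealInnerProductSpace

/-- The sum `K + P` of a partially defined operator `K` and an everywhere-defined bounded
operator `P`, as a partially defined operator with domain `K.domain`. -/
noncomputable def LinearPMap.addContinuous {H : Type*} [NormedAddCommGroup H]
    [InnerProductSpace ℝ H] (K : H →ₗ.[ℝ] H) (P : H →L[ℝ] H) : H →ₗ.[ℝ] H where
  domain := K.domain
  toFun := K.toFun + (P.toLinearMap.comp K.domain.subtype)

/-- The conjugate `e ∘ S ∘ e⁻¹` of a partially defined operator `S` on `H` by a continuous
linear equivalence `e : H ≃L[ℝ] H'`, with domain `e(D(S))`. -/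
noncomputable def LinearPMap.conjCLE {H H' : Type*} [NormedAddCommGroup H]
    [InnerProductSpace ℝ H] [NormedAddCommGroup H'] [InnerProductSpace ℝ H']
    (e : H ≃L[ℝ] H') (S : H →ₗ.[ℝ] H) : H' →ₗ.[ℝ] H' where
  domain := S.domain.map (e.toLinearEquiv : H →ₗ[ℝ] H')
  toFun := (e.toLinearEquiv.toLinearMap.comp S.toFun).comp
      (e.toLinearEquiv.submoduleMap S.domain).symm.toLinearMap

/-!
Write `T := e (K + P) e⁻¹`. Being skew-Hermitian, `T` satisfies `-T ≤ T†`, and equality holds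
as soon as `T + 1` and `T - 1` are onto: for `a ∈ D(T†)` pick `x` with `(T + 1) x = a - T† a`;
then `a - x ∈ ker (T† - 1) = (ran (T - 1))ᗮ = 0`.

Through `e`, surjectivity of `T + c` (`c ≠ 0`) is that of `K + P + c`. As `K` is skew-adjoint,
`K + c` is bounded below with closed dense range, so it has a bounded inverse `R`, and
`K + P + c = (1 + P R) (K + c)`. Since `T`, hence `K + P`, has no nonzero real eigenvalue,
`1 + P R` is injective, and being a compact perturbation of the identity it is onto by the
Fredholm alternative.
-/

open Filter Topology

lemma AntilipschitzWith.cauchySeq_of_cauchySeq_comp {α β : Type*} [PseudoMetricSpace α]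
    [PseudoMetricSpace β] {K : NNReal} {f : α → β} (hf : AntilipschitzWith K f)
    {u : ℕ → α} (hu : CauchySeq (f ∘ u)) : CauchySeq u := by
  obtain ⟨b, b_nonneg, hb, blim⟩ := cauchySeq_iff_le_tendsto_0.1 hu
  refine cauchySeq_iff_le_tendsto_0.2
    ⟨fun n ↦ K * b n, fun n ↦ mul_nonneg K.2 (b_nonneg n), ?_, ?_⟩
  · exact fun n m N hn hm ↦
      (hf.le_mul_dist _ _).trans (mul_le_mul_of_nonneg_left (hb n m N hn hm) K.2)
  · simpa using blim.const_mul (K : ℝ)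

theorem IsCompactOperator.surjective_one_add_of_injective {𝕜 X : Type*}
    [NontriviallyNormedField 𝕜] [NormedAddCommGroup X] [NormedSpace 𝕜 X] [CompleteSpace X]
    {C : X →L[𝕜] X} (hC : IsCompactOperator C) (hinj : Function.Injective ⇑(1 + C)) :
    Function.Surjective ⇑(1 + C) := by
  rcases hC.hasEigenvalue_or_mem_resolventSet (neg_ne_zero.2 (one_ne_zero (α := 𝕜))) with
    heig | hres
  · obtain ⟨v, hv⟩ := heig.exists_hasEigenvector
    have hCv : C v = -v := by simpa using hv.apply_eq_smul
    exact absurd (hinj (by simp [hCv])) hv.2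
  · rw [spectrum.mem_resolventSet_iff, map_neg, map_one, ← neg_add', IsUnit.neg_iff,
      ContinuousLinearMap.isUnit_iff_bijective] at hres
    exact hres.2

namespace LinearPMap

def addScalar {R E : Type*} [CommRing R] [AddCommGroup E] [Module R E] (T : E →ₗ.[R] E)
    (c : R) : T.domain →ₗ[R] E :=
  T.toFun + c • T.domain.subtype

@[simp]
lemma addScalar_apply {R E : Type*} [CommRing R] [AddCommGroup E] [Module R E] (T : E →ₗ.[R] E)
    (c : R) (x : T.domain) : T.addScalar c x = T x + c • (x : E) :=
  rfl

lemma addContinuous_addScalar_apply {E : Type*} [NormedAddCommGroup E] [InnerProductSpace ℝ E]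
    (K : E →ₗ.[ℝ] E) (P : E →L[ℝ] E) (c : ℝ) (x : K.domain) :
    (K.addContinuous P).addScalar c x = K.addScalar c x + P x := by
  change K x + P x + c • (x : E) = K x + c • (x : E) + P x
  abel

section SkewHermitian

variable {E : Type*} [NormedAddCommGroup E] [InnerProductSpace ℝ E] {T : E →ₗ.[ℝ] E}

lemma inner_apply_self_eq_zero_of_isFormalAdjoint_neg (hT : T.IsFormalAdjoint (-T))
    (x : T.domain) : ⟪T x, (x : E)⟫ = 0 := by
  have h := hT x x
  rw [neg_apply, inner_neg_right, real_inner_comm (T x)] at h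
  linarith

lemma norm_le_inv_abs_mul_norm_addScalar (hT : T.IsFormalAdjoint (-T)) {c : ℝ} (hc : c ≠ 0)
    (x : T.domain) : ‖(x : E)‖ ≤ |c|⁻¹ * ‖T.addScalar c x‖ := by
  have hsq : (|c| * ‖(x : E)‖) ^ 2 ≤ ‖T.addScalar c x‖ ^ 2 := by
    rw [addScalar_apply, norm_add_sq_real, real_inner_smul_right,
      inner_apply_self_eq_zero_of_isFormalAdjoint_neg hT, norm_smul, Real.norm_eq_abs]
    nlinarith [sq_nonneg ‖T x‖]
  rw [le_inv_mul_iff₀ (abs_pos.2 hc)]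
  exact (pow_le_pow_iff_left₀ (by positivity) (norm_nonneg _) two_ne_zero).1 hsq

lemma antilipschitz_addScalar (hT : T.IsFormalAdjoint (-T)) {c : ℝ} (hc : c ≠ 0) :
    AntilipschitzWith ‖c‖₊⁻¹ (T.addScalar c) :=
  AddMonoidHomClass.antilipschitz_of_bound _ fun x ↦ by
    simpa using norm_le_inv_abs_mul_norm_addScalar hT hc x

end SkewHermitian

section Conj

variable {E E' : Type*} [NormedAddCommGroup E] [InnerProductSpace ℝ E]
  [NormedAddCommGroup E'] [InnerProductSpace ℝ E'] (e : E ≃L[ℝ] E') (S : E →ₗ.[ℝ] E)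

lemma conjCLE_addScalar_apply (c : ℝ) (x : S.domain) :
    (conjCLE e S).addScalar c (e.toLinearEquiv.submoduleMap S.domain x) = e (S.addScalar c x) := by
  change e (S ((e.toLinearEquiv.submoduleMap S.domain).symm
    (e.toLinearEquiv.submoduleMap S.domain x))) + c • e (x : E) = e (S.addScalar c x)
  rw [LinearEquiv.symm_apply_apply, addScalar_apply, _root_.map_add, _root_.map_smul]

lemma injective_conjCLE_addScalar_iff (c : ℝ) :
    Function.Injective ((conjCLE e S).addScalar c) ↔ Function.Injective (S.addScalar c) := by
  have hcomp : ⇑((conjCLE e S).addScalar c) ∘ e.toLinearEquiv.submoduleMap S.domain =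
      e ∘ S.addScalar c := funext (conjCLE_addScalar_apply e S c)
  exact (EquivLike.injective_comp _ _).symm.trans (hcomp ▸ EquivLike.comp_injective _ _)

lemma surjective_conjCLE_addScalar_iff (c : ℝ) :
    Function.Surjective ((conjCLE e S).addScalar c) ↔ Function.Surjective (S.addScalar c) := by
  have hcomp : ⇑((conjCLE e S).addScalar c) ∘ e.toLinearEquiv.submoduleMap S.domain =
      e ∘ S.addScalar c := funext (conjCLE_addScalar_apply e S c)
  exact (EquivLike.surjective_comp _ _).symm.trans (hcomp ▸ EquivLike.comp_surjective _ _)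

variable {S} in
lemma dense_conjCLE_domain (hS : Dense (S.domain : Set E)) :
    Dense ((conjCLE e S).domain : Set E') := by
  simpa [conjCLE] using e.surjective.denseRange.dense_image e.continuous hS

end Conj

section AdjointCriterion

variable {E : Type*} [NormedAddCommGroup E] [InnerProductSpace ℝ E] [CompleteSpace E]
  {T : E →ₗ.[ℝ] E}

lemma eq_zero_of_adjoint_apply_eq_smul (hT : Dense (T.domain : Set E)) {c : ℝ}
    (hsurj : Function.Surjective (T.addScalar (-c))) (y : T.adjoint.domain)
    (hy : T.adjoint y = c • (y : E)) : (y : E) = 0 := by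
  obtain ⟨u, hu⟩ := hsurj y
  rw [← inner_self_eq_zero (𝕜 := ℝ)]
  calc ⟪(y : E), y⟫ = ⟪(y : E), T.addScalar (-c) u⟫ := by rw [hu]
    _ = 0 := by
      rw [addScalar_apply, inner_add_right, ← adjoint_isFormalAdjoint hT y u, hy,
        real_inner_smul_left, real_inner_smul_right]
      ring

theorem adjoint_eq_neg_of_surjective_addScalar (hT : Dense (T.domain : Set E))
    (hskew : T.IsFormalAdjoint (-T)) (h₁ : Function.Surjective (T.addScalar 1))
    (h₂ : Function.Surjective (T.addScalar (-1))) : T.adjoint = -T := by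
  have hle : -T ≤ T.adjoint := hskew.le_adjoint hT
  refine (eq_of_le_of_domain_eq hle (le_antisymm hle.1 fun a ha ↦ ?_)).symm
  obtain ⟨x, hx⟩ := h₁ (a - T.adjoint ⟨a, ha⟩)
  rw [addScalar_apply, one_smul] at hx
  let x' : T.adjoint.domain := ⟨x, hle.1 x.2⟩
  have hx' : T.adjoint x' = -T x := (hle.2 rfl).symm
  have hy : T.adjoint (⟨a, ha⟩ - x') = (1 : ℝ) • (a - x) := by
    rw [map_sub, hx', eq_sub_of_add_eq hx]
    module
  have hax : a = x := sub_eq_zero.1 (eq_zero_of_adjoint_apply_eq_smul hT h₂ _ hy)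
  rw [hax]
  exact x.2

end AdjointCriterion

section SkewAdjoint

variable {E : Type*} [NormedAddCommGroup E] [InnerProductSpace ℝ E] [CompleteSpace E]
  {K : E →ₗ.[ℝ] E}

lemma isFormalAdjoint_neg_of_adjoint_eq_neg (hdense : Dense (K.domain : Set E))
    (hK : K.adjoint = -K) : K.IsFormalAdjoint (-K) :=
  hK ▸ (adjoint_isFormalAdjoint hdense).symm

lemma exists_apply_eq_of_forall_inner (hdense : Dense (K.domain : Set E)) (hK : K.adjoint = -K)
    {x y : E} (h : ∀ v : K.domain, ⟪y, (v : E)⟫ = -⟪x, K v⟫) :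
    ∃ hx : x ∈ K.domain, K ⟨x, hx⟩ = y := by
  have hx : x ∈ K.adjoint.domain :=
    mem_adjoint_domain_of_exists x ⟨-y, fun v ↦ by rw [inner_neg_left, h, neg_neg]⟩
  have hKx : K.adjoint ⟨x, hx⟩ = -y :=
    adjoint_apply_eq hdense _ fun v ↦ by rw [inner_neg_left, h, neg_neg]
  obtain ⟨hdom, happ⟩ := LinearPMap.ext_iff.1 hK
  refine ⟨hdom ▸ hx, ?_⟩
  rw [← neg_neg y, ← hKx, happ, neg_apply, neg_neg]

lemma exists_apply_eq_of_tendsto (hdense : Dense (K.domain : Set E)) (hK : K.adjoint = -K)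
    {u : ℕ → K.domain} {x y : E} (hux : Tendsto (fun n ↦ (u n : E)) atTop (𝓝 x))
    (huy : Tendsto (fun n ↦ K (u n)) atTop (𝓝 y)) :
    ∃ hx : x ∈ K.domain, K ⟨x, hx⟩ = y := by
  refine exists_apply_eq_of_forall_inner hdense hK fun v ↦ tendsto_nhds_unique
    (huy.inner tendsto_const_nhds) ?_
  simp_rw [isFormalAdjoint_neg_of_adjoint_eq_neg hdense hK _ v, neg_apply, inner_neg_right]
  exact (hux.inner tendsto_const_nhds).neg

lemma isClosed_range_addScalar (hdense : Dense (K.domain : Set E)) (hK : K.adjoint = -K)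
    {c : ℝ} (hc : c ≠ 0) : _root_.IsClosed (LinearMap.range (K.addScalar c) : Set E) := by
  refine isSeqClosed_iff_isClosed.1 fun f z hf hfz ↦ ?_
  choose u hu using hf
  have hcauchy : CauchySeq (fun n ↦ (u n : E)) :=
    uniformContinuous_subtype_val.comp_cauchySeq
      ((antilipschitz_addScalar (isFormalAdjoint_neg_of_adjoint_eq_neg hdense hK) hc)
        |>.cauchySeq_of_cauchySeq_comp (by simpa only [Function.comp_def, hu] using hfz.cauchySeq))
  obtain ⟨x, hux⟩ := cauchySeq_tendsto_of_complete hcauchy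
  have huy : Tendsto (fun n ↦ K (u n)) atTop (𝓝 (z - c • x)) := by
    refine (hfz.sub (hux.const_smul c)).congr fun n ↦ ?_
    rw [← hu, addScalar_apply, add_sub_cancel_right]
  obtain ⟨hx, hKx⟩ := exists_apply_eq_of_tendsto hdense hK hux huy
  exact ⟨⟨x, hx⟩, by rw [addScalar_apply, hKx, sub_add_cancel]⟩

lemma orthogonal_range_addScalar (hdense : Dense (K.domain : Set E)) (hK : K.adjoint = -K)
    {c : ℝ} (hc : c ≠ 0) : (LinearMap.range (K.addScalar c))ᗮ = ⊥ := by
  refine (Submodule.eq_bot_iff _).2 fun w hw ↦ ?_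
  have hweak : ∀ v : K.domain, ⟪c • w, (v : E)⟫ = -⟪w, K v⟫ := fun v ↦ by
    have := Submodule.inner_right_of_mem_orthogonal (LinearMap.mem_range_self _ v) hw
    rw [addScalar_apply, inner_add_left, real_inner_smul_left, real_inner_comm w] at this
    rw [real_inner_smul_left, real_inner_comm (v : E)]
    linarith
  obtain ⟨hw, hKw⟩ := exists_apply_eq_of_forall_inner hdense hK hweak
  have := (antilipschitz_addScalar (isFormalAdjoint_neg_of_adjoint_eq_neg hdense hK)
    (neg_ne_zero.2 hc)).injective (a₁ := ⟨w, hw⟩) (a₂ := 0) (by simp [hKw])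
  simpa using congrArg Subtype.val this

lemma surjective_addScalar (hdense : Dense (K.domain : Set E)) (hK : K.adjoint = -K)
    {c : ℝ} (hc : c ≠ 0) : Function.Surjective (K.addScalar c) := by
  rw [← LinearMap.range_eq_top,
    ← (isClosed_range_addScalar hdense hK hc).submodule_topologicalClosure_eq,
    Submodule.topologicalClosure_eq_top_iff]
  exact orthogonal_range_addScalar hdense hK hc

lemma exists_rightInverse_addScalar (hdense : Dense (K.domain : Set E)) (hK : K.adjoint = -K)
    {c : ℝ} (hc : c ≠ 0) : ∃ R : E →L[ℝ] K.domain, ∀ z, K.addScalar c (R z) = z := by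
  have hskew := isFormalAdjoint_neg_of_adjoint_eq_neg hdense hK
  let L := LinearEquiv.ofBijective (K.addScalar c)
    ⟨(antilipschitz_addScalar hskew hc).injective, surjective_addScalar hdense hK hc⟩
  refine ⟨L.symm.toLinearMap.mkContinuous |c|⁻¹ fun z ↦ ?_, fun z ↦ L.apply_symm_apply z⟩
  have hz : K.addScalar c (L.symm z) = z := L.apply_symm_apply z
  simpa only [hz, LinearEquiv.coe_coe, Submodule.coe_norm] using
    norm_le_inv_abs_mul_norm_addScalar hskew hc (L.symm z)

theorem surjective_addContinuous_addScalar (hdense : Dense (K.domain : Set E))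
    (hK : K.adjoint = -K) {P : E →L[ℝ] E} (hP : IsCompactOperator P) {c : ℝ} (hc : c ≠ 0)
    (hinj : Function.Injective ((K.addContinuous P).addScalar c)) :
    Function.Surjective ((K.addContinuous P).addScalar c) := by
  obtain ⟨R, hR⟩ := exists_rightInverse_addScalar hdense hK hc
  let C : E →L[ℝ] E := P ∘L K.domain.subtypeL ∘L R
  have hfactor (z : E) : (K.addContinuous P).addScalar c (R z) = (1 + C) z := by
    rw [addContinuous_addScalar_apply, hR]
    rfl
  have hCinj : Function.Injective ⇑(1 + C) := fun a b hab ↦ calc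
    a = K.addScalar c (R a) := (hR a).symm
    _ = K.addScalar c (R b) := by rw [hinj ((hfactor a).trans (hab.trans (hfactor b).symm))]
    _ = b := hR b
  intro z
  obtain ⟨v, rfl⟩ := (hP.comp_clm _).surjective_one_add_of_injective hCinj z
  exact ⟨R v, hfactor v⟩

end SkewAdjoint

end LinearPMap

/-- If `K` is a densely defined skew-selfadjoint operator on the real Hilbert space `H`,
`P : H → H` is a compact bounded operator, and the conjugated operator
`e ∘ (K + P) ∘ e⁻¹` (with domain `e(D(K))`) is skew-Hermitian on `H'`, then
`e ∘ (K + P) ∘ e⁻¹` is skew-selfadjoint on `H'`. -/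
theorem skewSelfAdjoint_of_compact_perturbation
    {H H' : Type*} [NormedAddCommGroup H] [InnerProductSpace ℝ H] [CompleteSpace H]
    [NormedAddCommGroup H'] [InnerProductSpace ℝ H'] [CompleteSpace H']
    (e : H ≃L[ℝ] H')
    (K : H →ₗ.[ℝ] H) (hdense : Dense (K.domain : Set H))
    (hKskew : K.adjoint = -K)
    (P : H →L[ℝ] H) (hP : IsCompactOperator ⇑P)
    (hskew : ∀ x y : (LinearPMap.conjCLE e (K.addContinuous P)).domain,
        ⟪(LinearPMap.conjCLE e (K.addContinuous P)) x, (y : H')⟫ =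
          - ⟪(x : H'), (LinearPMap.conjCLE e (K.addContinuous P)) y⟫) :
    (LinearPMap.conjCLE e (K.addContinuous P)).adjoint
      = -(LinearPMap.conjCLE e (K.addContinuous P)) := by
  set T := LinearPMap.conjCLE e (K.addContinuous P)
  have hTskew : T.IsFormalAdjoint (-T) := fun x y ↦ by
    rw [LinearPMap.neg_apply, inner_neg_right]
    exact hskew x y
  have hsurj {c : ℝ} (hc : c ≠ 0) : Function.Surjective (T.addScalar c) := by
    rw [LinearPMap.surjective_conjCLE_addScalar_iff]
    refine LinearPMap.surjective_addContinuous_addScalar hdense hKskew hP hc ?_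
    rw [← LinearPMap.injective_conjCLE_addScalar_iff e]
    exact (LinearPMap.antilipschitz_addScalar hTskew hc).injective
  exact LinearPMap.adjoint_eq_neg_of_surjective_addScalar
    (LinearPMap.dense_conjCLE_domain e hdense) hTskew (hsurj one_ne_zero)
    (hsurj (neg_ne_zero.2 one_ne_zero))
end

section
/- Let ℋ be a complex Hilbert space, H ⊆ ℋ a closed real-linear subspace, and A : ℋ → ℋ a bounded selfadjoint complex-linear operator. Write K = iA. Then the following are equivalent: (i) for every s ∈ ℝ, the unitary exp(isA) maps H onto H; (ii) K maps H into H; (iii) for every x ∈ ℋ, if (K + 1)x ∈ H then x ∈ H, and if (K − 1)x ∈ H then x ∈ H (equivalently, the resolvents (K ± 1)⁻¹, which exist since K is skew-adjoint, map H into H). -/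
/-!
Since `K = iA` is skew, `‖K u + μ • u‖² = ‖K u‖² + μ² ‖u‖²` for real `μ`. This makes both
`1 - (K + 1) / (1 + ‖K‖²)` and `1 - (K + 1)⁻¹` strict contractions (of norm at most
`‖K‖ / √(1 + ‖K‖²)`), so `(K + 1)⁻¹` is a Neumann series in `K + 1` and vice versa. A closed real
subspace invariant under one of them is therefore invariant under the other; `K - 1` is handled
by replacing `K` with `-K`. Invariance under `exp (s K)` follows from `K`-invariance through the
exponential series, and conversely `K` is the derivative at `0` of `s ↦ exp (s K)`.
-/

open NormedSpace Set Filter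
open scoped InnerProductSpace Ring

namespace Submodule

variable {𝕜 E R : Type*} [NontriviallyNormedField 𝕜] [NormedAddCommGroup E] [NormedSpace 𝕜 E]
  [Ring R] [Module R E] {H : Submodule R E}

theorem mapsTo_of_hasSum (hH : IsClosed (H : Set E)) {ι : Type*} {T : ι → E →L[𝕜] E}
    {S : E →L[𝕜] E} (hS : HasSum T S) (hT : ∀ i, MapsTo (T i) H H) : MapsTo S H H := fun x hx =>
  hH.mem_of_tendsto ((ContinuousLinearMap.apply 𝕜 E x).hasSum hS)
    (Eventually.of_forall fun _ => H.sum_mem fun i _ => hT i hx)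

theorem mapsTo_pow {T : E →L[𝕜] E} (hT : MapsTo T H H) (n : ℕ) : MapsTo ⇑(T ^ n) H H := by
  induction n with
  | zero => simpa using mapsTo_id _
  | succ n ih => rw [pow_succ']; exact hT.comp ih

theorem mapsTo_inverse_of_norm_one_sub_lt_one [CompleteSpace E] (hH : IsClosed (H : Set E))
    {T : E →L[𝕜] E} (hT : ‖1 - T‖ < 1) (hTH : MapsTo T H H) : MapsTo ⇑T⁻¹ʳ H H := by
  have hsum := hasSum_geom_series_inverse (1 - T) hT
  rw [sub_sub_cancel] at hsum
  refine mapsTo_of_hasSum hH hsum (mapsTo_pow fun x hx => ?_)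
  simpa using H.sub_mem hx (hTH hx)

end Submodule

theorem ContinuousLinearMap.norm_lt_one_of_norm_apply_sq_le {𝕜 E F : Type*}
    [NontriviallyNormedField 𝕜] [NormedAddCommGroup E] [NormedSpace 𝕜 E] [NormedAddCommGroup F]
    [NormedSpace 𝕜 F] (T : E →L[𝕜] F) {q : ℝ} (hq : q < 1) (hT : ∀ u, ‖T u‖ ^ 2 ≤ q * ‖u‖ ^ 2) :
    ‖T‖ < 1 := by
  refine (T.opNorm_le_bound (Real.sqrt_nonneg q) fun u => ?_).trans_lt ?_
  · rw [← Real.sqrt_sq (norm_nonneg (T u)), ← Real.sqrt_sq (norm_nonneg u),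
      ← Real.sqrt_mul' _ (by positivity)]
    exact Real.sqrt_le_sqrt (hT u)
  · exact (Real.sqrt_lt' one_pos).2 (by simpa using hq)

section Skew

variable {ℋ : Type*} [NormedAddCommGroup ℋ] [InnerProductSpace ℂ ℋ] {K : ℋ →L[ℂ] ℋ}

theorem IsSelfAdjoint.re_inner_I_smul_apply_self_eq_zero [CompleteSpace ℋ] {A : ℋ →L[ℂ] ℋ}
    (hA : IsSelfAdjoint A) (u : ℋ) : (⟪(Complex.I • A) u, u⟫_ℂ).re = 0 := by
  simpa using hA.isSymmetric.im_inner_apply_self u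

theorem norm_apply_add_smul_sq_of_skew (hK : ∀ u, (⟪K u, u⟫_ℂ).re = 0) (μ : ℝ) (u : ℋ) :
    ‖K u + μ • u‖ ^ 2 = ‖K u‖ ^ 2 + μ ^ 2 * ‖u‖ ^ 2 := by
  rw [norm_add_sq (𝕜 := ℂ), ← Complex.coe_smul, inner_smul_right, norm_smul]
  simp [hK u, mul_pow]

theorem norm_one_sub_smul_add_one_lt_one_of_skew (hK : ∀ u, (⟪K u, u⟫_ℂ).re = 0) :
    ‖1 - (1 + ‖K‖ ^ 2)⁻¹ • (K + 1)‖ < 1 := by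
  have hc : 0 < 1 + ‖K‖ ^ 2 := by positivity
  refine ContinuousLinearMap.norm_lt_one_of_norm_apply_sq_le _ (q := ‖K‖ ^ 2 / (1 + ‖K‖ ^ 2))
    ((div_lt_one hc).2 (by linarith)) fun u => ?_
  have hTu : ((1 : ℋ →L[ℂ] ℋ) - (1 + ‖K‖ ^ 2 : ℝ)⁻¹ • (K + 1)) u =
      -(1 + ‖K‖ ^ 2 : ℝ)⁻¹ • (K u + (-‖K‖ ^ 2) • u) := by
    have : 1 = (1 + ‖K‖ ^ 2)⁻¹ * (1 + ‖K‖ ^ 2) := (inv_mul_cancel₀ hc.ne').symm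
    simp only [sub_apply, smul_apply, add_apply, one_apply_eq_self]
    linear_combination (norm := module) this • u
  have hKu : ‖K u‖ ^ 2 ≤ ‖K‖ ^ 2 * ‖u‖ ^ 2 := by rw [← mul_pow]; gcongr; exact K.le_opNorm u
  rw [hTu, norm_smul, mul_pow, norm_apply_add_smul_sq_of_skew hK, norm_neg, norm_inv,
    Real.norm_of_nonneg hc.le]
  calc (1 + ‖K‖ ^ 2)⁻¹ ^ 2 * (‖K u‖ ^ 2 + (-‖K‖ ^ 2) ^ 2 * ‖u‖ ^ 2)
      ≤ (1 + ‖K‖ ^ 2)⁻¹ ^ 2 * ((1 + ‖K‖ ^ 2) * (‖K‖ ^ 2 * ‖u‖ ^ 2)) := by gcongr; linarith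
    _ = ‖K‖ ^ 2 / (1 + ‖K‖ ^ 2) * ‖u‖ ^ 2 := by field_simp

theorem isUnit_add_one_of_skew [CompleteSpace ℋ] (hK : ∀ u, (⟪K u, u⟫_ℂ).re = 0) :
    IsUnit (K + 1) := by
  have hc : (1 + ‖K‖ ^ 2) ≠ 0 := by positivity
  have := isUnit_one_sub_of_norm_lt_one (norm_one_sub_smul_add_one_lt_one_of_skew hK)
  rw [sub_sub_cancel] at this
  exact (isUnit_smul_iff (Units.mk0 _ (inv_ne_zero hc)) _).1 this

theorem norm_one_sub_inverse_add_one_lt_one_of_skew [CompleteSpace ℋ]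
    (hK : ∀ u, (⟪K u, u⟫_ℂ).re = 0) :
    ‖1 - (K + 1)⁻¹ʳ‖ < 1 := by
  set R := (K + 1)⁻¹ʳ
  have hR : (K + 1) * R = 1 := Ring.mul_inverse_cancel _ (isUnit_add_one_of_skew hK)
  refine ContinuousLinearMap.norm_lt_one_of_norm_apply_sq_le _ (q := ‖K‖ ^ 2 / (1 + ‖K‖ ^ 2))
    ((div_lt_one (by positivity)).2 (by linarith)) fun y => ?_
  have hy : K (R y) + R y = y := by simpa using congr($hR y)
  have hKRy : ‖K (R y)‖ ^ 2 ≤ ‖K‖ ^ 2 * ‖R y‖ ^ 2 := by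
    rw [← mul_pow]; gcongr; exact K.le_opNorm _
  have hpyth := norm_apply_add_smul_sq_of_skew hK 1 (R y)
  rw [one_smul, hy, one_pow, one_mul] at hpyth
  have : (1 - R) y = K (R y) := by simp [eq_sub_of_add_eq hy]
  rw [this, hpyth, div_mul_eq_mul_div, le_div_iff₀ (by positivity)]
  nlinarith

end Skew

section Exp

variable {E : Type*} [NormedAddCommGroup E] [NormedSpace ℂ E] [CompleteSpace E]
  {H : Submodule ℝ E} {K : E →L[ℂ] E}

theorem Submodule.mapsTo_exp (hH : IsClosed (H : Set E)) (hK : MapsTo K H H) :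
    MapsTo ⇑(exp K) H H :=
  mapsTo_of_hasSum hH (exp_series_hasSum_exp' (𝕂 := ℝ) K) fun n _ hx =>
    H.smul_mem _ (mapsTo_pow hK n hx)

theorem Submodule.image_exp_eq (hH : IsClosed (H : Set E)) (hK : MapsTo K H H) :
    ⇑(exp K) '' H = H := by
  have hexp : exp K * exp (-K) = 1 := by
    rw [← exp_add_of_commute_of_mem_ball (𝕂 := ℝ) (Commute.neg_right (Commute.refl K)),
      add_neg_cancel, exp_zero] <;>
    simp [expSeries_radius_eq_top]
  refine (mapsTo_exp hH hK).image_subset.antisymm fun y hy => ⟨exp (-K) y, ?_, ?_⟩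
  · exact mapsTo_exp hH (fun x hx => by simpa using H.neg_mem (hK hx)) hy
  · simpa using congr($hexp y)

theorem Submodule.mapsTo_of_mapsTo_exp_smul (hH : IsClosed (H : Set E))
    (h : ∀ s : ℝ, MapsTo ⇑(exp (s • K)) H H) : MapsTo K H H := by
  intro x hx
  have hderiv : HasDerivAt (fun s : ℝ => exp (s • K) x) (K x) 0 := by
    have := ((ContinuousLinearMap.apply ℂ E x).restrictScalars ℝ).hasFDerivAt.comp_hasDerivAt 0
      (hasDerivAt_exp_smul_const (𝕂 := ℝ) K 0)
    simpa [Function.comp_def] using this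
  refine hH.mem_of_tendsto (hasDerivAt_iff_tendsto_slope.1 hderiv)
    (Eventually.of_forall fun s => ?_)
  rw [slope_def_module]
  exact H.smul_mem _ (H.sub_mem (h s hx) (by simpa using hx))

end Exp

section Resolvent

variable {ℋ : Type*} [NormedAddCommGroup ℋ] [InnerProductSpace ℂ ℋ] [CompleteSpace ℋ]
  {H : Submodule ℝ ℋ} {K : ℋ →L[ℂ] ℋ}

theorem Submodule.mem_of_apply_add_mem (hH : IsClosed (H : Set ℋ))
    (hK : ∀ u, (⟪K u, u⟫_ℂ).re = 0) (hKH : MapsTo K H H) {x : ℋ} (hx : K x + x ∈ H) : x ∈ H := by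
  set T : ℋ →L[ℂ] ℋ := (1 + ‖K‖ ^ 2 : ℝ)⁻¹ • (K + 1)
  have hT : ‖1 - T‖ < 1 := norm_one_sub_smul_add_one_lt_one_of_skew hK
  have hTunit : IsUnit T := by simpa using isUnit_one_sub_of_norm_lt_one hT
  have hTH : MapsTo T H H := fun y hy => H.smul_mem _ (H.add_mem (hKH hy) hy)
  have hTx : T⁻¹ʳ (T x) = x := by simpa using congr($(Ring.inverse_mul_cancel _ hTunit) x)
  rw [← hTx]
  exact mapsTo_inverse_of_norm_one_sub_lt_one hH hT hTH (H.smul_mem _ hx)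

theorem Submodule.mapsTo_of_forall_apply_add_mem (hH : IsClosed (H : Set ℋ))
    (hK : ∀ u, (⟪K u, u⟫_ℂ).re = 0) (h : ∀ x, K x + x ∈ H → x ∈ H) : MapsTo K H H := by
  have hunit := isUnit_add_one_of_skew hK
  have hRH : MapsTo ⇑(K + 1)⁻¹ʳ H H := fun x hx => by
    have : K ((K + 1)⁻¹ʳ x) + (K + 1)⁻¹ʳ x = x := by
      simpa using congr($(Ring.mul_inverse_cancel _ hunit) x)
    exact h _ (by rwa [this])
  have := mapsTo_inverse_of_norm_one_sub_lt_one hH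
    (norm_one_sub_inverse_add_one_lt_one_of_skew hK) hRH
  rw [Ring.inverse_inverse hunit] at this
  exact fun x hx => by simpa using H.sub_mem (this hx) hx

end Resolvent

/-- Characterisation of closed real-linear subspaces of a complex Hilbert space invariant
under the unitary one-parameter group `exp(isA)` generated by a bounded selfadjoint
operator `A`, with `K = iA`. -/
theorem realSubspace_invariant_tfae
    {ℋ : Type*} [NormedAddCommGroup ℋ] [InnerProductSpace ℂ ℋ] [CompleteSpace ℋ]
    (H : Submodule ℝ ℋ) (hH : IsClosed (H : Set ℋ))
    (A : ℋ →L[ℂ] ℋ) (hA : IsSelfAdjoint A) :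
    List.TFAE [
      ∀ s : ℝ, (⇑(NormedSpace.exp (((s : ℂ) * Complex.I) • A)) : ℋ → ℋ) '' (H : Set ℋ) = H,
      ∀ x ∈ H, (Complex.I • A) x ∈ H,
      ∀ x : ℋ, (((Complex.I • A) x + x ∈ H) → x ∈ H) ∧
        (((Complex.I • A) x - x ∈ H) → x ∈ H) ] := by
  set K := Complex.I • A
  have hK : ∀ u, (⟪K u, u⟫_ℂ).re = 0 := hA.re_inner_I_smul_apply_self_eq_zero
  have hK_neg : ∀ u, (⟪(-K) u, u⟫_ℂ).re = 0 := fun u => by simpa using hK u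
  have hsmul : ∀ s : ℝ, ((s : ℂ) * Complex.I) • A = s • K := fun s => by
    rw [mul_smul, Complex.coe_smul]
  tfae_have 1 → 2 := fun h x hx =>
    H.mapsTo_of_mapsTo_exp_smul hH (fun s => by rw [← hsmul, mapsTo_iff_image_subset, h s]) hx
  tfae_have 2 → 1 := fun h s => by
    rw [hsmul]
    exact H.image_exp_eq hH fun x hx => by simpa using H.smul_mem s (h x hx)
  tfae_have 2 → 3 := fun h x =>
    ⟨H.mem_of_apply_add_mem hH hK fun y hy => h y hy, fun hx =>
      H.mem_of_apply_add_mem hH hK_neg (fun y hy => by simpa using H.neg_mem (h y hy))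
        (by simpa [neg_add_eq_sub] using H.neg_mem hx)⟩
  tfae_have 3 → 2 := fun h x hx => H.mapsTo_of_forall_apply_add_mem hH hK (fun y => (h y).1) hx
  tfae_finish
end

section
/- Let C₁ = (a₁, b₁) and C₂ = (a₂, b₂) be two points of ℝ². If for all integers n₁, n₂ ∈ ℤ the point n₁C₁ + n₂C₂ lies in the region Q = {(a, b) ∈ ℝ² : a·b ≥ 0}, then C₁ and C₂ lie on a common straight line through the origin; equivalently, a₁·b₂ = a₂·b₁. -/
/-- If all integer combinations `n₁ C₁ + n₂ C₂` of two points `C₁ = (a₁, b₁)` and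
`C₂ = (a₂, b₂)` of `ℝ²` lie in the region `Q = {(a, b) : a * b ≥ 0}`, then `C₁` and `C₂`
lie on a common line through the origin, i.e. `a₁ * b₂ = a₂ * b₁`. -/
theorem collinear_of_int_combinations_in_Q (a₁ b₁ a₂ b₂ : ℝ)
    (h : ∀ n₁ n₂ : ℤ, 0 ≤ ((n₁ : ℝ) * a₁ + (n₂ : ℝ) * a₂) * ((n₁ : ℝ) * b₁ + (n₂ : ℝ) * b₂)) :
    a₁ * b₂ = a₂ * b₁ := by
  have key : ∀ x : ℝ,
      0 ≤ (a₁ * b₁) * (x * x) + (a₁ * b₂ + a₂ * b₁) * x + a₂ * b₂ := by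
    have hrat : ∀ r : ℚ,
        0 ≤ (a₁ * b₁) * ((r : ℝ) * (r : ℝ)) + (a₁ * b₂ + a₂ * b₁) * (r : ℝ) + a₂ * b₂ := by
      intro r
      have h0 := h r.num (r.den : ℤ)
      have hden : (0 : ℝ) < (r.den : ℝ) := by exact_mod_cast r.pos
      have hx : (r.num : ℝ) = (r : ℝ) * (r.den : ℝ) := by
        rw [Rat.cast_def]; field_simp
      rw [hx] at h0
      push_cast at h0
      nlinarith [h0, mul_pos hden hden]
    intro x
    have hcl : IsClosed {y : ℝ |
        0 ≤ (a₁ * b₁) * (y * y) + (a₁ * b₂ + a₂ * b₁) * y + a₂ * b₂} :=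
      isClosed_le continuous_const (by continuity)
    have hsub : Set.range ((↑) : ℚ → ℝ) ⊆ {y : ℝ |
        0 ≤ (a₁ * b₁) * (y * y) + (a₁ * b₂ + a₂ * b₁) * y + a₂ * b₂} := by
      rintro _ ⟨r, rfl⟩
      exact hrat r
    exact closure_minimal hsub hcl (Rat.denseRange_cast x)
  have hdis := discrim_le_zero key
  rw [discrim] at hdis
  have hd2 : (a₁ * b₂ - a₂ * b₁) ^ 2 ≤ 0 := by nlinarith [hdis]
  have h0 : (a₁ * b₂ - a₂ * b₁) ^ 2 = 0 := le_antisymm hd2 (sq_nonneg _)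
  have := pow_eq_zero_iff (n := 2) (by norm_num) |>.mp h0
  linarith [this]
end

section
/- Fix a real constant D, let Φ : ℝ² → ℝ be a continuously differentiable function, and let f(z, s) = ((1 + z) + e^{−s}(1 − z))/2, Z(z, s) = (((1 + z) − e^{−s}(1 − z))/2)/f(z, s). For (u, v) ∈ ℝ² define (V(s)Φ)(u, v) = f(u, s)^{−D} · f(−v, −s)^{−D} · Φ(Z(u, s), Z(v, s)) for s near 0. Then s ↦ (V(s)Φ)(u, v) is differentiable at s = 0 with derivative (K₀Φ)(u, v) = −(D/2)(u + v)Φ(u, v) + (1/2)(1 − u²)∂_uΦ(u, v) + (1/2)(1 − v²)∂_vΦ(u, v). -/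
/-!
At `s = 0` the flow is the identity: `f(z, 0) = 1` and `Z(z, 0) = z`. Hence by the product rule
only one factor is differentiated at a time, each at value `1`: the two prefactors contribute
`-D · ∂ₛf(u, 0) = D(1 - u)/2` and `-D · ∂ₛ[f(-v, -s)] = -D(1 + v)/2`, summing to `-(D/2)(u + v)`,
while `∂ₛZ(z, 0) = (1 - z²)/2` feeds the chain rule through `Φ`.
-/

open Real

namespace DoubleConeFlow

noncomputable def denom (z s : ℝ) : ℝ := ((1 + z) + exp (-s) * (1 - z)) / 2

noncomputable def numer (z s : ℝ) : ℝ := ((1 + z) - exp (-s) * (1 - z)) / 2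

noncomputable def moebius (z s : ℝ) : ℝ := numer z s / denom z s

@[simp]
lemma denom_zero (z : ℝ) : denom z 0 = 1 := by
  simp [denom]

@[simp]
lemma numer_zero (z : ℝ) : numer z 0 = z := by
  simp [numer]

@[simp]
lemma moebius_zero (z : ℝ) : moebius z 0 = z := by
  simp [moebius]

lemma hasDerivAt_denom (z s : ℝ) :
    HasDerivAt (denom z) (-(exp (-s) * (1 - z)) / 2) s := by
  have h := (((hasDerivAt_neg s).exp.mul_const (1 - z)).const_add (1 + z)).div_const 2
  exact h.congr_deriv (by ring)

lemma hasDerivAt_numer (z s : ℝ) :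
    HasDerivAt (numer z) (exp (-s) * (1 - z) / 2) s := by
  have h := (((hasDerivAt_neg s).exp.mul_const (1 - z)).const_sub (1 + z)).div_const 2
  exact h.congr_deriv (by ring)

lemma hasDerivAt_moebius_zero (z : ℝ) : HasDerivAt (moebius z) ((1 - z ^ 2) / 2) 0 := by
  have h := (hasDerivAt_numer z 0).div (hasDerivAt_denom z 0) (by simp)
  exact h.congr_deriv (by simp only [neg_zero, exp_zero, numer_zero, denom_zero]; ring)

lemma hasDerivAt_denom_rpow_zero (z p : ℝ) :
    HasDerivAt (fun s => denom z s ^ p) (p * (z - 1) / 2) 0 := by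
  have h := (hasDerivAt_denom z 0).rpow_const (p := p) (Or.inl (by simp))
  exact h.congr_deriv (by simp only [neg_zero, exp_zero, denom_zero, one_rpow]; ring)

lemma hasDerivAt_denom_neg_rpow_zero (z p : ℝ) :
    HasDerivAt (fun s => denom z (-s) ^ p) (p * (1 - z) / 2) 0 := by
  have h := (hasDerivAt_denom_rpow_zero z p).comp_of_eq 0 (hasDerivAt_neg 0) neg_zero.symm
  exact h.congr_deriv (by ring)

end DoubleConeFlow

lemma HasFDerivAt.comp_hasDerivAt_prodMk {E : Type*} [NormedAddCommGroup E] [NormedSpace ℝ E]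
    {Φ : ℝ × ℝ → E} {L : ℝ × ℝ →L[ℝ] E} {γ₁ γ₂ : ℝ → ℝ} {a b t : ℝ}
    (hΦ : HasFDerivAt Φ L (γ₁ t, γ₂ t)) (h₁ : HasDerivAt γ₁ a t) (h₂ : HasDerivAt γ₂ b t) :
    HasDerivAt (fun s => Φ (γ₁ s, γ₂ s)) (a • L (1, 0) + b • L (0, 1)) t := by
  have hab : ((a, b) : ℝ × ℝ) = a • ((1 : ℝ), (0 : ℝ)) + b • ((0 : ℝ), (1 : ℝ)) := by simp
  have h := hΦ.comp_hasDerivAt t (h₁.prodMk h₂)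
  rwa [hab, map_add, map_smul, map_smul] at h

open DoubleConeFlow in
/-- The derivative at `s = 0` of the massless double-cone modular flow
`(V(s)Φ)(u,v) = f(u,s)^{-D} f(-v,-s)^{-D} Φ(Z(u,s), Z(v,s))` acting on a `C¹` function `Φ`
in light-cone coordinates is the generator
`(K₀Φ)(u,v) = -(D/2)(u+v)Φ(u,v) + ½(1-u²)∂_uΦ(u,v) + ½(1-v²)∂_vΦ(u,v)`. -/
theorem modular_flow_generator (D : ℝ) (Φ : ℝ × ℝ → ℝ) (hΦ : ContDiff ℝ 1 Φ) (u v : ℝ) :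
    let f : ℝ → ℝ → ℝ := fun z s => ((1 + z) + Real.exp (-s) * (1 - z)) / 2
    let Z : ℝ → ℝ → ℝ := fun z s => (((1 + z) - Real.exp (-s) * (1 - z)) / 2) / f z s
    HasDerivAt (fun s => f u s ^ (-D) * f (-v) (-s) ^ (-D) * Φ (Z u s, Z v s))
      (-(D / 2) * (u + v) * Φ (u, v)
        + (1 / 2) * (1 - u ^ 2) * fderiv ℝ Φ (u, v) (1, 0)
        + (1 / 2) * (1 - v ^ 2) * fderiv ℝ Φ (u, v) (0, 1)) 0 := by
  intro f Z
  have hΦuv : HasFDerivAt Φ (fderiv ℝ Φ (u, v)) (moebius u 0, moebius v 0) := by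
    simpa using (hΦ.differentiable one_ne_zero (u, v)).hasFDerivAt
  have h := ((hasDerivAt_denom_rpow_zero u (-D)).mul
    (hasDerivAt_denom_neg_rpow_zero (-v) (-D))).mul
    (hΦuv.comp_hasDerivAt_prodMk (hasDerivAt_moebius_zero u) (hasDerivAt_moebius_zero v))
  exact h.congr_deriv (by
    simp only [neg_zero, denom_zero, one_rpow, moebius_zero, Pi.mul_apply, smul_eq_mul]; ring)
end

section
/- Let d ≥ 1 and set D = (d − 1)/2. For all smooth compactly supported functions f, g : ℝ^d → ℝ, the following identity holds: ∫_{ℝ^d} (1/2)(1 − ‖x‖²) g(x)² dx − ∫_{ℝ^d} f(x)·[ (1/2)(1 − ‖x‖²)Δf(x) − (x·∇f)(x) − D f(x) ] dx = (1/2)∫_{ℝ^d} (1 − ‖x‖²)( g(x)² + ‖∇f(x)‖² ) dx + D ∫_{ℝ^d} f(x)² dx. -/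
open MeasureTheory

/-- The `k`-th partial derivative of `f : ℝ^d → ℝ`. -/
noncomputable def pderiv' {d : ℕ} (f : EuclideanSpace ℝ (Fin d) → ℝ) (k : Fin d)
    (x : EuclideanSpace ℝ (Fin d)) : ℝ :=
  fderiv ℝ f x (EuclideanSpace.single k 1)

/-- The Laplacian `Δf = Σₖ ∂ₖ∂ₖ f` of `f : ℝ^d → ℝ`. -/
noncomputable def laplacian' {d : ℕ} (f : EuclideanSpace ℝ (Fin d) → ℝ)
    (x : EuclideanSpace ℝ (Fin d)) : ℝ :=
  ∑ k, fderiv ℝ (fun y => pderiv' f k y) x (EuclideanSpace.single k 1)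

/-- The radial derivative `x·∇f = r ∂_r f` of `f : ℝ^d → ℝ`. -/
noncomputable def radialDeriv' {d : ℕ} (f : EuclideanSpace ℝ (Fin d) → ℝ)
    (x : EuclideanSpace ℝ (Fin d)) : ℝ :=
  ∑ k, x k * pderiv' f k x

/-- The squared norm of the gradient `‖∇f‖²` of `f : ℝ^d → ℝ`. -/
noncomputable def gradNormSq' {d : ℕ} (f : EuclideanSpace ℝ (Fin d) → ℝ)
    (x : EuclideanSpace ℝ (Fin d)) : ℝ :=
  ∑ k, (pderiv' f k x) ^ 2

section Aux

variable {d : ℕ}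

local notation "E" => EuclideanSpace ℝ (Fin d)

/-- The parabolic weight `½(1-‖x‖²)`. -/
noncomputable def Wpar {d : ℕ} (x : EuclideanSpace ℝ (Fin d)) : ℝ := 1 / 2 * (1 - ‖x‖ ^ 2)

lemma contDiff_pderiv' {f : E → ℝ} (hf : ContDiff ℝ (⊤ : ℕ∞) f) (k : Fin d) :
    ContDiff ℝ (⊤ : ℕ∞) (pderiv' f k) :=
  (hf.fderiv_right le_rfl).clm_apply contDiff_const

lemma continuous_pderiv' {f : E → ℝ} (hf : ContDiff ℝ (⊤ : ℕ∞) f) (k : Fin d) :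
    Continuous (pderiv' f k) :=
  (contDiff_pderiv' hf k).continuous

lemma hasCompactSupport_pderiv' {f : E → ℝ} (hfs : HasCompactSupport f) (k : Fin d) :
    HasCompactSupport (pderiv' f k) :=
  (hfs.fderiv ℝ).comp_left (g := fun L : E →L[ℝ] ℝ => L (EuclideanSpace.single k 1)) rfl

lemma pderiv'_eq_zero {f : E → ℝ} {x : E} (hx : x ∉ tsupport f) (k : Fin d) :
    pderiv' f k x = 0 := by
  have h : fderiv ℝ f x = 0 := by
    by_contra h
    exact hx (support_fderiv_subset ℝ (Function.mem_support.2 h))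
  simp [pderiv', h]

lemma hasCompactSupport_radialDeriv' {f : E → ℝ} (hfs : HasCompactSupport f) :
    HasCompactSupport (radialDeriv' f) :=
  HasCompactSupport.intro hfs fun x hx => by
    simp [radialDeriv', pderiv'_eq_zero hx]

lemma hasCompactSupport_gradNormSq' {f : E → ℝ} (hfs : HasCompactSupport f) :
    HasCompactSupport (gradNormSq' f) :=
  HasCompactSupport.intro hfs fun x hx => by
    simp [gradNormSq', pderiv'_eq_zero hx]

lemma continuous_coord (k : Fin d) : Continuous (fun x : E => x k) :=
  (continuous_apply k).comp (PiLp.continuous_ofLp 2 fun _ : Fin d => ℝ)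

lemma continuous_radialDeriv' {f : E → ℝ} (hf : ContDiff ℝ (⊤ : ℕ∞) f) :
    Continuous (radialDeriv' f) := by
  unfold radialDeriv'
  exact continuous_finset_sum _ fun k _ => (continuous_coord k).mul (continuous_pderiv' hf k)

lemma continuous_gradNormSq' {f : E → ℝ} (hf : ContDiff ℝ (⊤ : ℕ∞) f) :
    Continuous (gradNormSq' f) := by
  unfold gradNormSq'
  exact continuous_finset_sum _ fun k _ => (continuous_pderiv' hf k).pow 2

lemma continuous_laplacian' {f : E → ℝ} (hf : ContDiff ℝ (⊤ : ℕ∞) f) :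
    Continuous (laplacian' f) := by
  unfold laplacian'
  exact continuous_finset_sum _ fun k _ => continuous_pderiv' (contDiff_pderiv' hf k) k

lemma hasCompactSupport_sq {f : E → ℝ} (hs : HasCompactSupport f) :
    HasCompactSupport (fun x : E => (f x) ^ 2) :=
  HasCompactSupport.intro hs fun x hx => by
    simp [image_eq_zero_of_notMem_tsupport hx]

lemma contDiff_Wpar : ContDiff ℝ (⊤ : ℕ∞) (Wpar (d := d)) :=
  contDiff_const.mul (contDiff_const.sub (contDiff_norm_sq ℝ))

lemma differentiable_Wpar : Differentiable ℝ (Wpar (d := d)) :=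
  contDiff_Wpar.differentiable (by simp)

lemma fderiv_normsq (x v : E) :
    fderiv ℝ (fun y : E => ‖y‖ ^ 2) x v = 2 * inner ℝ x v := by
  have h : HasFDerivAt (fun y : E => (inner ℝ y y : ℝ))
      ((fderivInnerCLM ℝ (x, x)).comp ((ContinuousLinearMap.id ℝ E).prod
        (ContinuousLinearMap.id ℝ E))) x :=
    (hasFDerivAt_id x).inner ℝ (hasFDerivAt_id x)
  have h2 : HasFDerivAt (fun y : E => ‖y‖ ^ 2)
      ((fderivInnerCLM ℝ (x, x)).comp ((ContinuousLinearMap.id ℝ E).prod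
        (ContinuousLinearMap.id ℝ E))) x := by
    convert h using 2 with y
    exact (real_inner_self_eq_norm_sq y).symm
  rw [h2.fderiv]
  simp only [fderivInnerCLM_apply, ContinuousLinearMap.comp_apply,
    ContinuousLinearMap.prod_apply, ContinuousLinearMap.id_apply]
  rw [real_inner_comm v x]
  ring

lemma fderiv_Wpar (x v : E) : fderiv ℝ (Wpar (d := d)) x v = -inner ℝ x v := by
  have hds : DifferentiableAt ℝ (fun y : E => ‖y‖ ^ 2) x :=
    ((contDiff_norm_sq ℝ : ContDiff ℝ (⊤ : ℕ∞) fun y : E => ‖y‖ ^ 2).differentiable (by simp)) x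
  have h1 : DifferentiableAt ℝ (fun y : E => 1 - ‖y‖ ^ 2) x :=
    (differentiableAt_const _).sub hds
  rw [show (Wpar (d := d)) = fun y : E => 1 / 2 * (1 - ‖y‖ ^ 2) from rfl,
    fderiv_const_mul h1, fderiv_const_sub]
  simp only [ContinuousLinearMap.smul_apply, ContinuousLinearMap.neg_apply, smul_eq_mul,
    fderiv_normsq x v]
  ring

lemma fderiv_Wpar_single (x : E) (k : Fin d) :
    fderiv ℝ (Wpar (d := d)) x (EuclideanSpace.single k 1) = -(x k) := by
  rw [fderiv_Wpar]
  have : (inner ℝ x (EuclideanSpace.single k (1 : ℝ)) : ℝ) = x k := by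
    rw [EuclideanSpace.inner_single_right]; simp
  rw [this]

/-- Integration by parts: `∫ W f Δf = ∫ f (x·∇f) − ∫ W ‖∇f‖²`. -/
lemma ibp_main {f : E → ℝ} (hf : ContDiff ℝ (⊤ : ℕ∞) f) (hfs : HasCompactSupport f) :
    ∫ x : E, Wpar x * (f x * laplacian' f x)
      = (∫ x : E, f x * radialDeriv' f x) - ∫ x : E, Wpar x * gradNormSq' f x := by
  have hWc : Continuous (Wpar (d := d)) := contDiff_Wpar.continuous
  have hfc : Continuous f := hf.continuous
  set u : E → ℝ := fun x => Wpar x * f x with hu_def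
  have hu : ContDiff ℝ (⊤ : ℕ∞) u := contDiff_Wpar.mul hf
  have hus : HasCompactSupport u := hfs.mul_left
  have hu_fderiv : ∀ (x : E) (k : Fin d),
      fderiv ℝ u x (EuclideanSpace.single k 1)
        = -(x k) * f x + Wpar x * pderiv' f k x := by
    intro x k
    have hm := fderiv_fun_mul (x := x) (differentiable_Wpar x) ((hf.differentiable (by simp)) x)
    rw [hu_def, show (fun x : E => Wpar x * f x) = fun y : E => Wpar y * f y from rfl, hm]
    simp only [ContinuousLinearMap.add_apply, ContinuousLinearMap.smul_apply, smul_eq_mul]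
    rw [fderiv_Wpar_single]
    unfold pderiv'
    ring
  have key : ∀ k : Fin d,
      (∫ x : E, u x * fderiv ℝ (fun y => pderiv' f k y) x (EuclideanSpace.single k 1))
        = ∫ x : E, (x k * (f x * pderiv' f k x) - Wpar x * (pderiv' f k x) ^ 2) := by
    intro k
    have hpc : Continuous (pderiv' f k) := continuous_pderiv' hf k
    have hps : HasCompactSupport (pderiv' f k) := hasCompactSupport_pderiv' hfs k
    have hppc : Continuous (pderiv' (pderiv' f k) k) :=
      continuous_pderiv' (contDiff_pderiv' hf k) k
    have hpps : HasCompactSupport (pderiv' (pderiv' f k) k) :=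
      hasCompactSupport_pderiv' hps k
    have hfd : Continuous (fun x : E => fderiv ℝ u x (EuclideanSpace.single k 1)) :=
      continuous_pderiv' hu k
    have h1 : Integrable (fun x : E =>
        fderiv ℝ u x (EuclideanSpace.single k 1) * pderiv' f k x) volume :=
      (hfd.mul hpc).integrable_of_hasCompactSupport hps.mul_left
    have h2 : Integrable (fun x : E =>
        u x * fderiv ℝ (fun y => pderiv' f k y) x (EuclideanSpace.single k 1)) volume :=
      (hu.continuous.mul hppc).integrable_of_hasCompactSupport hpps.mul_left
    have h3 : Integrable (fun x : E => u x * pderiv' f k x) volume :=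
      (hu.continuous.mul hpc).integrable_of_hasCompactSupport hps.mul_left
    have hibp := integral_mul_fderiv_eq_neg_fderiv_mul_of_integrable
      (f := u) (g := pderiv' f k) (v := EuclideanSpace.single k 1)
      h1 h2 h3 (fun x _ => hu.differentiable (by simp) x) (fun x _ => (contDiff_pderiv' hf k).differentiable (by simp) x)
    rw [hibp, ← integral_neg]
    apply integral_congr_ae
    filter_upwards with x
    rw [hu_fderiv x k]
    ring
  have hint1 : ∀ k : Fin d, Integrable (fun x : E =>
      u x * fderiv ℝ (fun y => pderiv' f k y) x (EuclideanSpace.single k 1)) volume :=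
    fun k => (hu.continuous.mul
        (continuous_pderiv' (contDiff_pderiv' hf k) k)).integrable_of_hasCompactSupport
      (hasCompactSupport_pderiv' (hasCompactSupport_pderiv' hfs k) k).mul_left
  have hint2 : ∀ k : Fin d, Integrable (fun x : E =>
      x k * (f x * pderiv' f k x) - Wpar x * (pderiv' f k x) ^ 2) volume := by
    intro k
    have hpc : Continuous (pderiv' f k) := continuous_pderiv' hf k
    have hps : HasCompactSupport (pderiv' f k) := hasCompactSupport_pderiv' hfs k
    have c1 : Continuous (fun x : E => x k * (f x * pderiv' f k x)) :=
      (continuous_coord k).mul (hfc.mul hpc)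
    have c2 : Continuous (fun x : E => Wpar x * (pderiv' f k x) ^ 2) :=
      hWc.mul (hpc.pow 2)
    have s1 : HasCompactSupport (fun x : E => x k * (f x * pderiv' f k x)) :=
      HasCompactSupport.mul_left (HasCompactSupport.mul_left hps)
    have s2 : HasCompactSupport (fun x : E => Wpar x * (pderiv' f k x) ^ 2) :=
      HasCompactSupport.mul_left
        (HasCompactSupport.intro hps fun x hx => by
          simp [image_eq_zero_of_notMem_tsupport hx])
    exact (c1.integrable_of_hasCompactSupport s1).sub (c2.integrable_of_hasCompactSupport s2)
  have hr : Integrable (fun x : E => f x * radialDeriv' f x) volume :=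
    (hfc.mul (continuous_radialDeriv' hf)).integrable_of_hasCompactSupport
      (hasCompactSupport_radialDeriv' hfs).mul_left
  have hgr : Integrable (fun x : E => Wpar x * gradNormSq' f x) volume :=
    (hWc.mul (continuous_gradNormSq' hf)).integrable_of_hasCompactSupport
      (hasCompactSupport_gradNormSq' hfs).mul_left
  calc ∫ x : E, Wpar x * (f x * laplacian' f x)
      = ∫ x : E, ∑ k : Fin d,
          u x * fderiv ℝ (fun y => pderiv' f k y) x (EuclideanSpace.single k 1) := by
        apply integral_congr_ae
        filter_upwards with x
        simp only [laplacian', Finset.mul_sum, hu_def]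
        refine Finset.sum_congr rfl fun k _ => ?_
        ring
    _ = ∑ k : Fin d, ∫ x : E,
          u x * fderiv ℝ (fun y => pderiv' f k y) x (EuclideanSpace.single k 1) :=
        integral_finset_sum _ (fun k _ => hint1 k)
    _ = ∑ k : Fin d, ∫ x : E,
          (x k * (f x * pderiv' f k x) - Wpar x * (pderiv' f k x) ^ 2) :=
        Finset.sum_congr rfl fun k _ => key k
    _ = ∫ x : E, ∑ k : Fin d,
          (x k * (f x * pderiv' f k x) - Wpar x * (pderiv' f k x) ^ 2) :=
        (integral_finset_sum _ (fun k _ => hint2 k)).symm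
    _ = ∫ x : E, (f x * radialDeriv' f x - Wpar x * gradNormSq' f x) := by
        apply integral_congr_ae
        filter_upwards with x
        simp only [radialDeriv', gradNormSq', Finset.mul_sum, ← Finset.sum_sub_distrib]
        refine Finset.sum_congr rfl fun k _ => ?_
        ring
    _ = (∫ x : E, f x * radialDeriv' f x) - ∫ x : E, Wpar x * gradNormSq' f x :=
        integral_sub hr hgr

/-- The quadratic form of the massless modular generator on Cauchy data `(f, g)` equals
the parabolic-weighted integral of the classical energy density plus the scaling-dimension
term: `∫ ½(1-r²)g² - ∫ f(½(1-r²)Δf - r∂_r f - Df) = ½∫(1-r²)(g² + ‖∇f‖²) + D∫f²`. -/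
theorem massless_quadratic_form_identity (d : ℕ) (hd : 1 ≤ d)
    (f g : EuclideanSpace ℝ (Fin d) → ℝ)
    (hf : ContDiff ℝ (⊤ : ℕ∞) f) (hfs : HasCompactSupport f)
    (hg : ContDiff ℝ (⊤ : ℕ∞) g) (hgs : HasCompactSupport g) :
    (∫ x : EuclideanSpace ℝ (Fin d), (1 / 2) * (1 - ‖x‖ ^ 2) * (g x) ^ 2)
      - ∫ x : EuclideanSpace ℝ (Fin d),
          f x * ((1 / 2) * (1 - ‖x‖ ^ 2) * laplacian' f x - radialDeriv' f x
            - (((d : ℝ) - 1) / 2) * f x)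
    = (1 / 2) * (∫ x : EuclideanSpace ℝ (Fin d),
          (1 - ‖x‖ ^ 2) * ((g x) ^ 2 + gradNormSq' f x))
        + (((d : ℝ) - 1) / 2) * ∫ x : EuclideanSpace ℝ (Fin d), (f x) ^ 2 := by
  set D : ℝ := ((d : ℝ) - 1) / 2 with hD
  have hWc : Continuous (Wpar (d := d)) := contDiff_Wpar.continuous
  have hfc : Continuous f := hf.continuous
  have hgc : Continuous g := hg.continuous
  -- integrability facts
  have If2 : Integrable (fun x : EuclideanSpace ℝ (Fin d) => (f x) ^ 2) volume :=
    (hfc.pow 2).integrable_of_hasCompactSupport (hasCompactSupport_sq hfs)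
  have Iwg : Integrable (fun x : EuclideanSpace ℝ (Fin d) => Wpar x * (g x) ^ 2) volume :=
    (hWc.mul (hgc.pow 2)).integrable_of_hasCompactSupport (hasCompactSupport_sq hgs).mul_left
  have Iwl : Integrable (fun x : EuclideanSpace ℝ (Fin d) => Wpar x * (f x * laplacian' f x)) volume := by
    refine (hWc.mul (hfc.mul (continuous_laplacian' hf))).integrable_of_hasCompactSupport ?_
    exact (HasCompactSupport.mul_right hfs).mul_left
  have Ir : Integrable (fun x : EuclideanSpace ℝ (Fin d) => f x * radialDeriv' f x) volume :=
    (hfc.mul (continuous_radialDeriv' hf)).integrable_of_hasCompactSupport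
      (hasCompactSupport_radialDeriv' hfs).mul_left
  have Iwgr : Integrable (fun x : EuclideanSpace ℝ (Fin d) => Wpar x * gradNormSq' f x) volume :=
    (hWc.mul (continuous_gradNormSq' hf)).integrable_of_hasCompactSupport
      (hasCompactSupport_gradNormSq' hfs).mul_left
  -- the second integral on the LHS
  have step1 : (∫ x : EuclideanSpace ℝ (Fin d), f x * ((1 / 2) * (1 - ‖x‖ ^ 2) * laplacian' f x - radialDeriv' f x
        - D * f x))
      = (∫ x : EuclideanSpace ℝ (Fin d), Wpar x * (f x * laplacian' f x)) - (∫ x : EuclideanSpace ℝ (Fin d), f x * radialDeriv' f x)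
        - D * ∫ x : EuclideanSpace ℝ (Fin d), (f x) ^ 2 := by
    have Isub : Integrable (fun x : EuclideanSpace ℝ (Fin d) =>
        Wpar x * (f x * laplacian' f x) - f x * radialDeriv' f x) volume := Iwl.sub Ir
    have IDf : Integrable (fun x : EuclideanSpace ℝ (Fin d) => D * (f x) ^ 2) volume :=
      If2.const_mul D
    have e1 : (∫ x : EuclideanSpace ℝ (Fin d), f x * ((1 / 2) * (1 - ‖x‖ ^ 2) * laplacian' f x
          - radialDeriv' f x - D * f x))
        = ∫ x : EuclideanSpace ℝ (Fin d),
            ((Wpar x * (f x * laplacian' f x) - f x * radialDeriv' f x) - D * (f x) ^ 2) := by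
      apply integral_congr_ae
      filter_upwards with x
      simp only [Wpar]
      ring
    rw [e1, integral_sub Isub IDf, integral_sub Iwl Ir, integral_const_mul]
  have step2 : (1 / 2 : ℝ) * (∫ x : EuclideanSpace ℝ (Fin d), (1 - ‖x‖ ^ 2) * ((g x) ^ 2 + gradNormSq' f x))
      = (∫ x : EuclideanSpace ℝ (Fin d), Wpar x * (g x) ^ 2) + ∫ x : EuclideanSpace ℝ (Fin d), Wpar x * gradNormSq' f x := by
    have Iadd : Integrable (fun x : EuclideanSpace ℝ (Fin d) =>
        Wpar x * (g x) ^ 2 + Wpar x * gradNormSq' f x) volume := Iwg.add Iwgr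
    have e2 : (∫ x : EuclideanSpace ℝ (Fin d), (1 - ‖x‖ ^ 2) * ((g x) ^ 2 + gradNormSq' f x))
        = ∫ x : EuclideanSpace ℝ (Fin d),
            (2 : ℝ) * (Wpar x * (g x) ^ 2 + Wpar x * gradNormSq' f x) := by
      apply integral_congr_ae
      filter_upwards with x
      simp only [Wpar]
      ring
    rw [e2, integral_const_mul, integral_add Iwg Iwgr]
    ring
  have hWeq : (∫ x : EuclideanSpace ℝ (Fin d), (1 / 2 : ℝ) * (1 - ‖x‖ ^ 2) * (g x) ^ 2)
      = ∫ x : EuclideanSpace ℝ (Fin d), Wpar x * (g x) ^ 2 := rfl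
  rw [hWeq, step1, step2, ibp_main hf hfs]
  ring

end Aux
end

section
/- Let d ≥ 1, m > 0, and set μ(p) = √(‖p‖² + m²) for p ∈ ℝ^d. For every smooth function g : ℝ^d → ℂ with bounded derivatives (e.g. a Schwartz function) and every p ∈ ℝ^d: (1/2)·μ(p)·[ (μ·g)(p) + Δ(μ·g)(p) ] = (1/2)·μ(p)²·[ g(p) + Δg(p) ] + (p·∇g)(p) + ((d − 1)/2)·g(p) + (m²/(2 μ(p)²))·g(p), where μ·g denotes the pointwise product and Δ is the Laplacian in p. -/
/-- The `k`-th partial derivative of a complex-valued function on `ℝ^d`. -/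
noncomputable def cpderiv {d : ℕ} (g : EuclideanSpace ℝ (Fin d) → ℂ) (k : Fin d)
    (p : EuclideanSpace ℝ (Fin d)) : ℂ :=
  fderiv ℝ g p (EuclideanSpace.single k 1)

/-- The Laplacian `Δg = Σₖ ∂ₖ∂ₖ g` of a complex-valued function on `ℝ^d`. -/
noncomputable def claplacian {d : ℕ} (g : EuclideanSpace ℝ (Fin d) → ℂ)
    (p : EuclideanSpace ℝ (Fin d)) : ℂ :=
  ∑ k, fderiv ℝ (fun q => cpderiv g k q) p (EuclideanSpace.single k 1)

variable {d : ℕ} {m : ℝ}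

lemma mu_pos (hm : 0 < m) (q : EuclideanSpace ℝ (Fin d)) :
    0 < Real.sqrt (‖q‖ ^ 2 + m ^ 2) :=
  Real.sqrt_pos.2 (by positivity)

lemma mu_sq (hm : 0 < m) (q : EuclideanSpace ℝ (Fin d)) :
    Real.sqrt (‖q‖ ^ 2 + m ^ 2) ^ 2 = ‖q‖ ^ 2 + m ^ 2 :=
  Real.sq_sqrt (by positivity)

lemma hasFDerivAt_mu (hm : 0 < m) (q : EuclideanSpace ℝ (Fin d)) :
    HasFDerivAt (fun r : EuclideanSpace ℝ (Fin d) => Real.sqrt (‖r‖ ^ 2 + m ^ 2))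
      ((Real.sqrt (‖q‖ ^ 2 + m ^ 2))⁻¹ • (innerSL ℝ q)) q := by
  have h1 : HasFDerivAt (fun r : EuclideanSpace ℝ (Fin d) => ‖r‖ ^ 2 + m ^ 2)
      ((2 : ℝ) • (innerSL ℝ q)) q := by
    simpa [two_smul] using ((hasFDerivAt_id q).norm_sq.add_const (m ^ 2))
  have h2 := h1.sqrt (by positivity : (0:ℝ) < ‖q‖ ^ 2 + m ^ 2).ne'
  refine h2.congr_fderiv ?_
  rw [smul_smul]
  congr 1
  have := (mu_pos hm q).ne'
  field_simp

lemma hasFDerivAt_coord (k : Fin d) (q : EuclideanSpace ℝ (Fin d)) :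
    HasFDerivAt (fun r : EuclideanSpace ℝ (Fin d) => r k)
      (EuclideanSpace.proj (𝕜 := ℝ) k) q :=
  (EuclideanSpace.proj (𝕜 := ℝ) k).hasFDerivAt


variable {g : EuclideanSpace ℝ (Fin d) → ℂ}

lemma contDiff_cpderiv (hg : ContDiff ℝ (⊤ : ℕ∞) g) (k : Fin d) :
    ContDiff ℝ (⊤ : ℕ∞) (cpderiv g k) := by
  have h : ContDiff ℝ (⊤ : ℕ∞) (fderiv ℝ g) := hg.fderiv_right (by simp)
  exact (ContinuousLinearMap.apply ℝ ℂ (EuclideanSpace.single k 1)).contDiff.comp h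

lemma hasFDerivAt_muC (hm : 0 < m) (q : EuclideanSpace ℝ (Fin d)) :
    HasFDerivAt (fun r : EuclideanSpace ℝ (Fin d) => ((Real.sqrt (‖r‖ ^ 2 + m ^ 2) : ℝ) : ℂ))
      (Complex.ofRealCLM.comp ((Real.sqrt (‖q‖ ^ 2 + m ^ 2))⁻¹ • (innerSL ℝ q))) q :=
  Complex.ofRealCLM.hasFDerivAt.comp q (hasFDerivAt_mu hm q)

-- Lemma A : first derivative of μ·g
lemma cpderiv_mul_mu (hm : 0 < m) (hg : ContDiff ℝ (⊤ : ℕ∞) g) (k : Fin d)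
    (q : EuclideanSpace ℝ (Fin d)) :
    cpderiv (fun r => ((Real.sqrt (‖r‖ ^ 2 + m ^ 2) : ℝ) : ℂ) * g r) k q
      = ((q k / Real.sqrt (‖q‖ ^ 2 + m ^ 2) : ℝ) : ℂ) * g q
        + ((Real.sqrt (‖q‖ ^ 2 + m ^ 2) : ℝ) : ℂ) * cpderiv g k q := by
  have hgq := (hg.differentiable (by simp) q).hasFDerivAt
  have h : fderiv ℝ (fun r => ((Real.sqrt (‖r‖ ^ 2 + m ^ 2) : ℝ) : ℂ) * g r) q
      = _ := ((hasFDerivAt_muC hm q).mul hgq).fderiv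
  unfold cpderiv
  rw [h]
  simp [EuclideanSpace.inner_single_right, smul_eq_mul, div_eq_inv_mul]
  ring

lemma fderiv_A (hm : 0 < m) (hg : ContDiff ℝ (⊤ : ℕ∞) g) (k : Fin d) (p : EuclideanSpace ℝ (Fin d)) :
    fderiv ℝ (fun q => ((q k / Real.sqrt (‖q‖ ^ 2 + m ^ 2) : ℝ) : ℂ) * g q) p
        (EuclideanSpace.single k 1)
      = ((1 / Real.sqrt (‖p‖ ^ 2 + m ^ 2)
            - p k ^ 2 / Real.sqrt (‖p‖ ^ 2 + m ^ 2) ^ 3 : ℝ) : ℂ) * g p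
        + ((p k / Real.sqrt (‖p‖ ^ 2 + m ^ 2) : ℝ) : ℂ) * cpderiv g k p := by
  set μp := Real.sqrt (‖p‖ ^ 2 + m ^ 2) with hμp
  have hne : μp ≠ 0 := (mu_pos hm p).ne'
  have hinv : HasFDerivAt (fun q : EuclideanSpace ℝ (Fin d) => (Real.sqrt (‖q‖ ^ 2 + m ^ 2))⁻¹)
      ((-(μp ^ 2)⁻¹) • (μp⁻¹ • innerSL ℝ p)) p :=
    (hasDerivAt_inv hne).comp_hasFDerivAt p (hasFDerivAt_mu hm p)
  have hq : HasFDerivAt (fun q : EuclideanSpace ℝ (Fin d) => q k / Real.sqrt (‖q‖ ^ 2 + m ^ 2))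
      (p k • ((-(μp ^ 2)⁻¹) • (μp⁻¹ • innerSL ℝ p))
        + μp⁻¹ • (EuclideanSpace.proj (𝕜 := ℝ) k)) p := by
    simp only [div_eq_mul_inv]
    exact (hasFDerivAt_coord k p).mul hinv
  have hC := Complex.ofRealCLM.hasFDerivAt.comp p hq
  have hgp := (hg.differentiable (by simp) p).hasFDerivAt
  have h' : fderiv ℝ (fun q => ((q k / Real.sqrt (‖q‖ ^ 2 + m ^ 2) : ℝ) : ℂ) * g q) p
      = _ := (hC.mul hgp).fderiv
  rw [h']
  simp only [ContinuousLinearMap.add_apply, ContinuousLinearMap.coe_comp',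
    ContinuousLinearMap.smul_apply, Function.comp_apply, Complex.ofRealCLM_apply,
    smul_eq_mul, PiLp.proj_apply, EuclideanSpace.single_apply]
  rw [show (innerSL ℝ p) (EuclideanSpace.single k 1) = p k by
    simp [EuclideanSpace.inner_single_right]]
  push_cast
  have hC2 : (μp : ℂ) ≠ 0 := by exact_mod_cast hne
  unfold cpderiv
  simp only [← hμp]
  field_simp [hC2]
  ring

lemma fderiv_B (hm : 0 < m) (hg : ContDiff ℝ (⊤ : ℕ∞) g) (k : Fin d) (p : EuclideanSpace ℝ (Fin d)) :
    fderiv ℝ (fun q => ((Real.sqrt (‖q‖ ^ 2 + m ^ 2) : ℝ) : ℂ) * cpderiv g k q) p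
        (EuclideanSpace.single k 1)
      = ((p k / Real.sqrt (‖p‖ ^ 2 + m ^ 2) : ℝ) : ℂ) * cpderiv g k p
        + ((Real.sqrt (‖p‖ ^ 2 + m ^ 2) : ℝ) : ℂ)
          * fderiv ℝ (fun q => cpderiv g k q) p (EuclideanSpace.single k 1) := by
  have hμ := hasFDerivAt_muC hm p
  have hdp := ((contDiff_cpderiv hg k).differentiable (by simp) p).hasFDerivAt
  have h' : fderiv ℝ (fun q => ((Real.sqrt (‖q‖ ^ 2 + m ^ 2) : ℝ) : ℂ) * cpderiv g k q) p
      = _ := (hμ.mul hdp).fderiv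
  rw [h']
  simp only [ContinuousLinearMap.add_apply, ContinuousLinearMap.coe_comp',
    ContinuousLinearMap.smul_apply, Function.comp_apply, Complex.ofRealCLM_apply,
    smul_eq_mul]
  rw [show (innerSL ℝ p) (EuclideanSpace.single k 1) = p k by
    simp [EuclideanSpace.inner_single_right]]
  push_cast
  ring

lemma contDiff_mu (hm : 0 < m) :
    ContDiff ℝ (⊤ : ℕ∞) (fun q : EuclideanSpace ℝ (Fin d) => Real.sqrt (‖q‖ ^ 2 + m ^ 2)) :=
  ContDiff.sqrt ((contDiff_norm_sq ℝ).add contDiff_const) (fun q => by positivity)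

lemma contDiff_coord (k : Fin d) :
    ContDiff ℝ (⊤ : ℕ∞) (fun q : EuclideanSpace ℝ (Fin d) => q k) :=
  (EuclideanSpace.proj (𝕜 := ℝ) k).contDiff


lemma alg_aux (M G T L D mm : ℂ) (hM : M ≠ 0) :
    1 / 2 * M * (M * G + ((D * (1 / M) - (M ^ 2 - mm ^ 2) / M ^ 3) * G + T / M + (T / M + M * L)))
      = 1 / 2 * M ^ 2 * (G + L) + T + (D - 1) / 2 * G + mm ^ 2 / (2 * M ^ 2) * G := by
  have h1 : M * M⁻¹ = 1 := mul_inv_cancel₀ hM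
  linear_combination (D * G / 2 + T - G * (M ^ 2 * M⁻¹ ^ 2 + M * M⁻¹ + 1) / 2
    + mm ^ 2 * M⁻¹ ^ 2 * G / 2) * h1

/-- The Fourier-side identity expressing `μ_m M_m μ_m = -L_m`:
`½ μ (μg + Δ(μg)) = ½ μ² (g + Δg) + p·∇g + ((d-1)/2) g + (m²/(2μ²)) g`
with `μ(p) = √(‖p‖² + m²)`, for smooth `g` with bounded derivatives. -/
theorem fourier_side_identity (d : ℕ) (hd : 1 ≤ d) (m : ℝ) (hm : 0 < m)
    (g : EuclideanSpace ℝ (Fin d) → ℂ) (hg : ContDiff ℝ (⊤ : ℕ∞) g)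
    (hbd : ∀ n : ℕ, ∃ C : ℝ, ∀ p : EuclideanSpace ℝ (Fin d), ‖iteratedFDeriv ℝ n g p‖ ≤ C)
    (p : EuclideanSpace ℝ (Fin d)) :
    let μ : EuclideanSpace ℝ (Fin d) → ℝ := fun q => Real.sqrt (‖q‖ ^ 2 + m ^ 2)
    (1 / 2 : ℂ) * (μ p : ℂ) * ((μ p : ℂ) * g p + claplacian (fun q => (μ q : ℂ) * g q) p)
      = (1 / 2 : ℂ) * (μ p : ℂ) ^ 2 * (g p + claplacian g p)
        + (∑ k, (p k : ℂ) * cpderiv g k p)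
        + ((((d : ℝ) - 1) / 2 : ℝ) : ℂ) * g p
        + ((m ^ 2 / (2 * μ p ^ 2) : ℝ) : ℂ) * g p := by
  intro μ
  have hne : μ p ≠ 0 := (mu_pos hm p).ne'
  have hMne : ((μ p : ℝ) : ℂ) ≠ 0 := by exact_mod_cast hne
  -- differentiability of the two pieces
  have diffA : ∀ k : Fin d, Differentiable ℝ
      (fun q : EuclideanSpace ℝ (Fin d) => ((q k / μ q : ℝ) : ℂ) * g q) := by
    intro k
    have h1 : ContDiff ℝ (⊤ : ℕ∞) (fun q : EuclideanSpace ℝ (Fin d) => q k / μ q) :=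
      (contDiff_coord k).div (contDiff_mu hm) (fun q => (mu_pos hm q).ne')
    exact ((Complex.ofRealCLM.contDiff.comp h1).mul hg).differentiable (by simp)
  have diffB : ∀ k : Fin d, Differentiable ℝ
      (fun q : EuclideanSpace ℝ (Fin d) => ((μ q : ℝ) : ℂ) * cpderiv g k q) :=
    fun k => ((Complex.ofRealCLM.contDiff.comp (contDiff_mu hm)).mul
      (contDiff_cpderiv hg k)).differentiable (by simp)
  -- compute the Laplacian of μ·g
  have hlap : claplacian (fun q => ((μ q : ℝ) : ℂ) * g q) p
      = ∑ k, ((((1 / μ p - p k ^ 2 / μ p ^ 3 : ℝ)) : ℂ) * g p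
          + ((p k / μ p : ℝ) : ℂ) * cpderiv g k p
          + (((p k / μ p : ℝ) : ℂ) * cpderiv g k p
            + ((μ p : ℝ) : ℂ)
              * fderiv ℝ (fun q => cpderiv g k q) p (EuclideanSpace.single k 1))) := by
    unfold claplacian
    refine Finset.sum_congr rfl fun k _ => ?_
    have hfun : (fun q => cpderiv (fun r => ((μ r : ℝ) : ℂ) * g r) k q)
        = fun q => ((q k / μ q : ℝ) : ℂ) * g q + ((μ q : ℝ) : ℂ) * cpderiv g k q :=
      funext (cpderiv_mul_mu hm hg k)
    rw [hfun, fderiv_fun_add ((diffA k).differentiableAt) ((diffB k).differentiableAt),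
      ContinuousLinearMap.add_apply, fderiv_A hm hg k p, fderiv_B hm hg k p]
  rw [hlap]
  -- split the sum
  have hnorm : ∑ k, (p k : ℂ) ^ 2 = ((‖p‖ ^ 2 : ℝ) : ℂ) := by
    have : ∑ k, (p k) ^ 2 = ‖p‖ ^ 2 := by
      rw [EuclideanSpace.norm_eq, Real.sq_sqrt (by positivity)]
      exact Finset.sum_congr rfl fun k _ => by rw [Real.norm_eq_abs, sq_abs]
    exact_mod_cast this
  have hμ2 : ((μ p : ℝ) : ℂ) ^ 2 = ((‖p‖ ^ 2 : ℝ) : ℂ) + (m : ℂ) ^ 2 := by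
    exact_mod_cast mu_sq hm p
  simp only [Finset.sum_add_distrib, ← Finset.sum_mul, ← Finset.mul_sum]
  push_cast
  rw [Finset.sum_sub_distrib]
  simp only [Finset.sum_const, Finset.card_univ, Fintype.card_fin, nsmul_eq_mul,
    ← Finset.sum_div, hnorm]
  have hlapg : claplacian g p
      = ∑ k, fderiv ℝ (fun q => cpderiv g k q) p (EuclideanSpace.single k 1) := rfl
  rw [hlapg]
  have hT : ∑ k, (p k : ℂ) / (μ p : ℂ) * cpderiv g k p
      = (∑ k, (p k : ℂ) * cpderiv g k p) / (μ p : ℂ) := by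
    rw [Finset.sum_div]
    exact Finset.sum_congr rfl fun k _ => by ring
  rw [hT]
  set G := g p
  set T := ∑ k, (p k : ℂ) * cpderiv g k p
  set L := ∑ k, fderiv ℝ (fun q => cpderiv g k q) p (EuclideanSpace.single k 1)
  set M := ((μ p : ℝ) : ℂ)
  have hA : ((‖p‖ ^ 2 : ℝ) : ℂ) = M ^ 2 - (m : ℂ) ^ 2 := by rw [hμ2]; ring
  rw [hA]
  exact alg_aux M G T L (d : ℂ) (m : ℂ) hMne
end

section
/- Let ℋ be a complex Hilbert space, H ⊆ ℋ a closed real-linear subspace, and A : ℋ → ℋ a bounded selfadjoint complex-linear operator such that exp(isA)H = H for all s ∈ ℝ. Then for every continuous function g : ℝ → ℂ satisfying g(−t) = conj(g(t)) for all t ∈ ℝ, the operator g(A) defined by the continuous functional calculus of A maps H into H. -/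
/-!
Differentiating `s ↦ exp (i s A)` at `s = 0` inside the closed subspace `H` shows that `i A`
maps `H` into `H`, hence so does every real polynomial in `i A`. The even part
`p(A) + p(-A)` of a real polynomial in `A`, and `i` times its odd part, are real polynomials
in `i A`. Since `g(-t) = conj (g t)`, `Re g` is even and `Im g` is odd, so symmetrising
Weierstrass approximants of them yields such polynomials approximating `(Re g)(A)` and
`i (Im g)(A)` in operator norm; `H` being closed, both operators preserve `H`.
-/

open Polynomial NormedSpace

theorem Submodule.mem_of_forall_exp_smul_mem {𝔸 : Type*} [NormedRing 𝔸] [NormedAlgebra ℝ 𝔸]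
    [CompleteSpace 𝔸] (S : Submodule ℝ 𝔸) (hS : IsClosed (S : Set 𝔸)) {a : 𝔸}
    (h : ∀ s : ℝ, exp (s • a) ∈ S) : a ∈ S := by
  have hderiv : HasDerivAt (fun s : ℝ => exp (s • a)) a 0 := by
    simpa using hasDerivAt_exp_smul_const (𝕂 := ℝ) a 0
  refine hS.mem_of_tendsto (hasDerivAt_iff_tendsto_slope.mp hderiv)
    (Filter.Eventually.of_forall fun s => ?_)
  rw [slope_def_module]
  exact S.smul_mem _ (S.sub_mem (h s) (h 0))

section InvariantSubalgebra

variable {E : Type*} [NormedAddCommGroup E] [NormedSpace ℂ E]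

def Submodule.invariantSubalgebra (H : Submodule ℝ E) : Subalgebra ℝ (E →L[ℂ] E) where
  carrier := {T | Set.MapsTo T H H}
  mul_mem' hS hT := hS.comp hT
  add_mem' hS hT _ hx := H.add_mem (hS hx) (hT hx)
  algebraMap_mem' r _ hx := by simpa [Algebra.algebraMap_eq_smul_one] using H.smul_mem r hx

theorem Submodule.mem_invariantSubalgebra {H : Submodule ℝ E} {T : E →L[ℂ] E} :
    T ∈ H.invariantSubalgebra ↔ Set.MapsTo T H H := Iff.rfl

theorem Submodule.isClosed_invariantSubalgebra {H : Submodule ℝ E} (hH : IsClosed (H : Set E)) :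
    IsClosed (H.invariantSubalgebra : Set (E →L[ℂ] E)) := by
  have hiInter : (H.invariantSubalgebra : Set (E →L[ℂ] E)) = ⋂ x ∈ H, (fun T => T x) ⁻¹' H := by
    ext T; simp [Submodule.mem_invariantSubalgebra, Set.MapsTo]
  rw [hiInter]
  exact isClosed_biInter fun x _ => hH.preimage (continuous_eval_const x)

end InvariantSubalgebra

section ComplexAlgebra

variable {𝒜 : Type*} [Ring 𝒜] [Algebra ℂ 𝒜]

theorem Subalgebra.pow_add_neg_pow_mem (S : Subalgebra ℝ 𝒜) {a : 𝒜} (ha : Complex.I • a ∈ S)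
    (n : ℕ) :
    a ^ n + (-a) ^ n ∈ S ∧ Complex.I • (a ^ n - (-a) ^ n) ∈ S := by
  induction n with
  | zero =>
    simpa only [pow_zero, sub_self, smul_zero, S.zero_mem, and_true]
      using S.add_mem S.one_mem S.one_mem
  | succ n ih =>
    obtain ⟨heven, hodd⟩ := ih
    have h1 : a ^ (n + 1) + (-a) ^ (n + 1) =
        -(Complex.I • (a ^ n - (-a) ^ n) * (Complex.I • a)) := by
      simp only [smul_mul_smul, Complex.I_mul_I, neg_smul, one_smul, neg_neg, pow_succ]
      noncomm_ring
    have h2 : Complex.I • (a ^ (n + 1) - (-a) ^ (n + 1)) =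
        (a ^ n + (-a) ^ n) * (Complex.I • a) := by
      simp only [mul_smul_comm, pow_succ]
      congr 1
      noncomm_ring
    rw [h1, h2]
    exact ⟨S.neg_mem (S.mul_mem hodd ha), S.mul_mem heven ha⟩

theorem Subalgebra.aeval_add_aeval_neg_mem (S : Subalgebra ℝ 𝒜) {a : 𝒜} (ha : Complex.I • a ∈ S)
    (p : ℝ[X]) :
    aeval a p + aeval (-a) p ∈ S ∧ Complex.I • (aeval a p - aeval (-a) p) ∈ S := by
  induction p using Polynomial.induction_on' with
  | add p q hp hq =>
    constructor
    · convert S.add_mem hp.1 hq.1 using 1; simp only [map_add]; abel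
    · convert S.add_mem hp.2 hq.2 using 1; simp only [map_add, ← smul_add]; congr 1; abel
  | monomial n c =>
    obtain ⟨heven, hodd⟩ := S.pow_add_neg_pow_mem ha n
    simp only [aeval_monomial, Algebra.algebraMap_eq_smul_one, smul_mul_assoc, one_mul]
    exact ⟨by simpa only [smul_add] using S.smul_mem heven c,
      by simpa only [smul_sub, smul_comm c] using S.smul_mem hodd c⟩

end ComplexAlgebra

theorem exists_polynomial_near_of_eq_mul_comp_neg {f : ℝ → ℝ} {M : ℝ}
    (hf : ContinuousOn f (Set.Icc (-M) M)) {σ : ℝ} (hσ : |σ| ≤ 1)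
    (hfσ : ∀ t, σ * f (-t) = f t) {ε : ℝ} (hε : 0 < ε) :
    ∃ p : ℝ[X], ∀ t ∈ Set.Icc (-M) M, |f t - (p.eval t + σ * p.eval (-t))| ≤ ε := by
  obtain ⟨p, hp⟩ := exists_polynomial_near_of_continuousOn (-M) M (fun t => f t / 2)
    (hf.div_const 2) (ε / 2) (by positivity)
  refine ⟨p, fun t ht => ?_⟩
  have hneg : -t ∈ Set.Icc (-M) M := ⟨by linarith [ht.2], by linarith [ht.1]⟩
  calc |f t - (p.eval t + σ * p.eval (-t))|
      = |(f t / 2 - p.eval t) + σ * (f (-t) / 2 - p.eval (-t))| := by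
        rw [← hfσ t]; ring_nf
    _ ≤ |f t / 2 - p.eval t| + |σ| * |f (-t) / 2 - p.eval (-t)| := by
        rw [← abs_mul]
        exact abs_add_le _ _
    _ ≤ ε / 2 + 1 * (ε / 2) := by
        rw [abs_sub_comm, abs_sub_comm (f (-t) / 2)]
        gcongr
        · exact (hp t ht).le
        · exact (hp (-t) hneg).le
    _ = ε := by ring

section CStarAlgebra

variable {𝒜 : Type*} [CStarAlgebra 𝒜]

theorem cfc_eval_add_mul_eval_neg {a : 𝒜} (ha : IsSelfAdjoint a) (p : ℝ[X]) (σ : ℝ) :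
    cfc (fun t => p.eval t + σ * p.eval (-t)) a = aeval a p + σ • aeval (-a) p := by
  rw [cfc_add .., cfc_const_mul .., cfc_comp_neg (fun t => p.eval t) a, cfc_polynomial p a,
    cfc_polynomial p (-a) ha.neg]

theorem cfc_mem_of_eq_mul_comp_neg {S : Set 𝒜} (hS : IsClosed S) {a : 𝒜} (ha : IsSelfAdjoint a)
    {σ : ℝ} (hσ : |σ| ≤ 1) {f : ℝ → ℝ} (hf : Continuous f) (hfσ : ∀ t, σ * f (-t) = f t)
    (hpoly : ∀ p : ℝ[X], aeval a p + σ • aeval (-a) p ∈ S) : cfc f a ∈ S := by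
  obtain ⟨M, hM⟩ :=
    (ContinuousFunctionalCalculus.isCompact_spectrum (R := ℝ) a).isBounded.subset_closedBall 0
  rw [Real.closedBall_eq_Icc, zero_sub, zero_add] at hM
  rw [← hS.closure_eq, Metric.mem_closure_iff]
  intro ε hε
  obtain ⟨p, hp⟩ :=
    exists_polynomial_near_of_eq_mul_comp_neg hf.continuousOn hσ hfσ (half_pos hε)
  refine ⟨_, hpoly p, ?_⟩
  rw [dist_eq_norm, ← cfc_eval_add_mul_eval_neg ha p σ, ← cfc_sub ..]
  exact (norm_cfc_le (half_pos hε).le fun t ht => hp t (hM ht)).trans_lt (half_lt_self hε)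

end CStarAlgebra

/-- If a closed real-linear subspace `H` of a complex Hilbert space is globally invariant
under the unitaries `exp(isA)` generated by a bounded selfadjoint operator `A`, then for
every continuous `g : ℝ → ℂ` with `g(-t) = conj (g t)`, the operator
`g(A) = (Re g)(A) + i (Im g)(A)` (continuous functional calculus) maps `H` into `H`. -/
theorem functional_calculus_preserves_real_subspace
    {ℋ : Type*} [NormedAddCommGroup ℋ] [InnerProductSpace ℂ ℋ] [CompleteSpace ℋ]
    (H : Submodule ℝ ℋ) (hH : IsClosed (H : Set ℋ))
    (A : ℋ →L[ℂ] ℋ) (hA : IsSelfAdjoint A)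
    (hinv : ∀ s : ℝ,
      (⇑(NormedSpace.exp (((s : ℂ) * Complex.I) • A)) : ℋ → ℋ) '' (H : Set ℋ) = H)
    (g : ℝ → ℂ) (hg : Continuous g) (hsym : ∀ t : ℝ, g (-t) = starRingEnd ℂ (g t)) :
    ∀ x ∈ H,
      (cfc (fun t : ℝ => (g t).re) A + Complex.I • cfc (fun t : ℝ => (g t).im) A) x ∈ H := by
  set S := H.invariantSubalgebra
  have hS : IsClosed (S : Set (ℋ →L[ℂ] ℋ)) := Submodule.isClosed_invariantSubalgebra hH
  have hIA : Complex.I • A ∈ S := by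
    refine Submodule.mem_of_forall_exp_smul_mem (Subalgebra.toSubmodule S) hS fun s => ?_
    rw [Subalgebra.mem_toSubmodule, ← Complex.coe_smul, smul_smul]
    exact fun x hx => hinv s ▸ Set.mem_image_of_mem _ hx
  have hre : cfc (fun t : ℝ => (g t).re) A ∈ S :=
    cfc_mem_of_eq_mul_comp_neg hS hA (σ := 1) (by norm_num) (by fun_prop)
      (fun t => by simp [hsym]) fun p => by simpa using (S.aeval_add_aeval_neg_mem hIA p).1
  have him : Complex.I • cfc (fun t : ℝ => (g t).im) A ∈ S :=
    cfc_mem_of_eq_mul_comp_neg (S := (Complex.I • ·) ⁻¹' S)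
      (hS.preimage (continuous_const_smul _)) hA (σ := -1) (by norm_num) (by fun_prop)
      (fun t => by simp [hsym])
      fun p => by simpa [sub_eq_add_neg] using (S.aeval_add_aeval_neg_mem hIA p).2
  exact S.add_mem hre him
end
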